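/- arXiv:2112.06177 — 5 statements merged into one kernel-verified Lean document; each statement's English description precedes it below -/
import Mathlib

section
/- Suppose there exists ϱ > 0 such that ∫₀¹ ψ₀(θ·ϱ) dθ < 1. Then x* is the only solution of T(x) = 0 in D ∩ B̄(x*, ϱ): if y* ∈ D satisfies ‖y* − x*‖ ≤ ϱ and T(y*) = 0, then y* = x*. -/
/-!
Put `v = y* - x*`. Along the segment from `x*` to `y*`, the map `θ ↦ A T(x* + θ v) - θ v` has
derivative `A (T'(x* + θ v) - T'(x*)) v`, of norm at most `ψ₀(θ ϱ) ‖v‖` by the center condition.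
Displacement is at most the integral of the speed, so `‖v‖ ≤ (∫₀¹ ψ₀(θ ϱ) dθ) ‖v‖`, which forces
`v = 0` because the integral is `< 1`.
-/

open Set intervalIntegral

section SegmentEstimate

variable {E G : Type*} [NormedAddCommGroup E] [NormedSpace ℝ E]
  [NormedAddCommGroup G] [NormedSpace ℝ G]

theorem norm_image_sub_sub_le_integral_mul {D : Set E} (hD : Convex ℝ D)
    {F : E → G} {F' : E → E →L[ℝ] G} (hF : ∀ z ∈ D, HasFDerivAt F (F' z) z)
    (L : E →L[ℝ] G) {x y : E} (hx : x ∈ D) (hy : y ∈ D) {B : ℝ → ℝ}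
    (hB : IntervalIntegrable B MeasureTheory.volume 0 1)
    (hbound : ∀ θ ∈ Ioo (0 : ℝ) 1, ‖F' (x + θ • (y - x)) - L‖ ≤ B θ) :
    ‖F y - F x - L (y - x)‖ ≤ (∫ θ in (0 : ℝ)..1, B θ) * ‖y - x‖ := by
  set g : ℝ → G := fun θ => F (x + θ • (y - x)) - θ • L (y - x)
  have hg : ∀ θ ∈ Icc (0 : ℝ) 1,
      HasDerivAt g ((F' (x + θ • (y - x)) - L) (y - x)) θ := by
    intro θ hθ
    have hline : HasDerivAt (fun θ : ℝ => x + θ • (y - x)) (y - x) θ := by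
      simpa using ((hasDerivAt_id θ).smul_const (y - x)).const_add x
    exact (((hF _ (hD.add_smul_sub_mem hx hy hθ)).comp_hasDerivAt θ hline).sub
      ((hasDerivAt_id' θ).smul_const (L (y - x)))).congr_deriv
      (by rw [one_smul, sub_apply])
  have hdisp : ‖g 1 - g 0‖ ≤ ∫ θ in (0 : ℝ)..1, B θ * ‖y - x‖ := by
    refine norm_sub_le_integral_of_norm_deriv_le_of_le zero_le_one
      (fun θ hθ => (hg θ hθ).continuousAt.continuousWithinAt)
      (fun θ hθ => (hg θ (Ioo_subset_Icc_self hθ)).differentiableAt.differentiableWithinAt)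
      (Filter.Eventually.of_forall fun θ hθ => ?_) (hB.mul_const _)
    rw [(hg θ (Ioo_subset_Icc_self hθ)).deriv]
    exact ((F' _ - L).le_opNorm _).trans
      (mul_le_mul_of_nonneg_right (hbound θ hθ) (norm_nonneg _))
  have hends : g 1 - g 0 = F y - F x - L (y - x) := by
    simp only [g, one_smul, zero_smul, add_zero, add_sub_cancel]
    abel
  rwa [hends, integral_mul_const] at hdisp

end SegmentEstimate

theorem uniqueness_of_solution_general
    {X Y : Type*} [NormedAddCommGroup X] [NormedSpace ℝ X]
    [NormedAddCommGroup Y] [NormedSpace ℝ Y]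
    (D : Set X) (hDconv : Convex ℝ D)
    (T : X → Y) (T' : X → X →L[ℝ] Y)
    (hT : ∀ x ∈ D, HasFDerivAt T (T' x) x)
    (xs : X) (hxs : xs ∈ D) (hTxs : T xs = 0)
    (A : Y →L[ℝ] X)
    (hA1 : A.comp (T' xs) = ContinuousLinearMap.id ℝ X)
    (ψ0 : ℝ → ℝ)
    (hψ0mono : MonotoneOn ψ0 (Ici 0))
    (hcenter : ∀ x ∈ D, ‖A.comp (T' x - T' xs)‖ ≤ ψ0 ‖x - xs‖)
    (ϱ : ℝ)
    (hint : (∫ θ in (0:ℝ)..1, ψ0 (θ * ϱ)) < 1) :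
    ∀ ys ∈ D, ‖ys - xs‖ ≤ ϱ → T ys = 0 → ys = xs := by
  intro ys hys hyϱ hTys
  have hϱ : 0 ≤ ϱ := (norm_nonneg _).trans hyϱ
  have hmono : MonotoneOn (fun θ => ψ0 (θ * ϱ)) (uIcc 0 1) := by
    rw [uIcc_of_le zero_le_one]
    exact fun s hs t ht hst =>
      hψ0mono (mul_nonneg hs.1 hϱ) (mul_nonneg ht.1 hϱ) (mul_le_mul_of_nonneg_right hst hϱ)
  have hbound : ∀ θ ∈ Ioo (0 : ℝ) 1, ‖A.comp (T' (xs + θ • (ys - xs))) - .id ℝ X‖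
      ≤ ψ0 (θ * ϱ) := by
    intro θ hθ
    rw [← hA1, ← ContinuousLinearMap.comp_sub]
    refine (hcenter _ (hDconv.add_smul_sub_mem hxs hys (Ioo_subset_Icc_self hθ))).trans
      (hψ0mono (norm_nonneg _) (mul_nonneg hθ.1.le hϱ) ?_)
    rw [add_sub_cancel_left, norm_smul, Real.norm_of_nonneg hθ.1.le]
    exact mul_le_mul_of_nonneg_left hyϱ hθ.1.le
  have hle := norm_image_sub_sub_le_integral_mul hDconv
    (fun z hz => A.hasFDerivAt.comp z (hT z hz)) (.id ℝ X) hxs hys hmono.intervalIntegrable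
    hbound
  simp only [Function.comp_apply, hTys, hTxs, sub_self, ContinuousLinearMap.id_apply,
    zero_sub, norm_neg] at hle
  rw [← sub_eq_zero, ← norm_le_zero_iff]
  nlinarith [norm_nonneg (ys - xs)]

/-- Uniqueness of the solution: if `∫₀¹ ψ₀(θϱ) dθ < 1` for some
`ϱ > 0`, then `x*` is the only solution of `T(x) = 0` in `D ∩ closedBall x* ϱ`. -/
theorem uniqueness_of_solution
    {X Y : Type*} [NormedAddCommGroup X] [NormedSpace ℝ X] [CompleteSpace X]
    [NormedAddCommGroup Y] [NormedSpace ℝ Y] [CompleteSpace Y]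
    (D : Set X) (hD : IsOpen D) (hDconv : Convex ℝ D)
    (T : X → Y) (T' : X → X →L[ℝ] Y)
    (hT : ∀ x ∈ D, HasFDerivAt T (T' x) x)
    (hT'cont : ContinuousOn T' D)
    (xs : X) (hxs : xs ∈ D) (hTxs : T xs = 0)
    (A : Y →L[ℝ] X)
    (hA1 : A.comp (T' xs) = ContinuousLinearMap.id ℝ X)
    (hA2 : (T' xs).comp A = ContinuousLinearMap.id ℝ Y)
    (ψ0 : ℝ → ℝ) (hψ0cont : ContinuousOn ψ0 (Ici 0))
    (hψ0mono : MonotoneOn ψ0 (Ici 0))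
    (hψ0zero : ψ0 0 = 0) (hψ0nonneg : ∀ t, 0 ≤ t → 0 ≤ ψ0 t)
    (hcenter : ∀ x ∈ D, ‖A.comp (T' x - T' xs)‖ ≤ ψ0 ‖x - xs‖)
    (ϱ : ℝ) (hϱ : 0 < ϱ)
    (hint : (∫ θ in (0:ℝ)..1, ψ0 (θ * ϱ)) < 1) :
    ∀ ys ∈ D, ‖ys - xs‖ ≤ ϱ → T ys = 0 → ys = xs :=
  uniqueness_of_solution_general D hDconv T T' hT xs hxs hTxs A hA1 ψ0 hψ0mono hcenter ϱ hint
end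

section
/- Let x ∈ D₀ with a = ‖x − x*‖ and ψ₀(a) < 1, so that T′(x) is invertible. Then the Newton correction satisfies ‖x − x* − T′(x)⁻¹ T(x)‖ ≤ (1/(1 − ψ₀(a))) · (∫₀¹ ψ((1−t)a) dt) · a. -/
open Set intervalIntegral

/-!
Write `L₀ = T'(x*)`, `L = T'(x)` and `γ t = x* + t (x - x*)`. Since `T(x*) = 0`,
`x - x* - L⁻¹ T(x) = (L⁻¹ L₀) · L₀⁻¹ (L (x - x*) - (T(x) - T(x*)))`.
The mean value inequality along `γ` bounds the second factor by `∫₀¹ ψ((1 - t) a) dt · a`,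
because `‖L₀⁻¹ (L - T'(γ t))‖ ≤ ψ(‖x - γ t‖) = ψ((1 - t) a)`. For the first factor,
`L⁻¹ L₀ (1 + L₀⁻¹ (L - L₀)) = 1` with `‖L₀⁻¹ (L - L₀)‖ ≤ ψ₀(a) < 1`, so `‖L⁻¹ L₀‖ ≤ 1 / (1 - ψ₀(a))`.
-/

open AffineMap (lineMap lineMap_apply_one lineMap_apply_zero hasDerivAt_lineMap)
open ContinuousLinearMap MeasureTheory

theorem norm_le_one_div_of_mul_one_add_eq_one {R : Type*} [NormedRing R] {c e : R} {q : ℝ}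
    (h : c * (1 + e) = 1) (hone : ‖(1 : R)‖ ≤ 1) (he : ‖e‖ ≤ q) (hq : q < 1) :
    ‖c‖ ≤ 1 / (1 - q) := by
  have hc : c = 1 - c * e := by rw [← h]; noncomm_ring
  have : ‖c‖ ≤ 1 + ‖c‖ * q :=
    calc ‖c‖ ≤ ‖(1 : R)‖ + ‖c * e‖ := by nth_rewrite 1 [hc]; exact norm_sub_le _ _
      _ ≤ 1 + ‖c‖ * q := by gcongr; exact (norm_mul_le c e).trans (by gcongr)
  rw [le_div_iff₀ (by linarith)]
  linarith

section

variable {𝕜 X Y : Type*} [NontriviallyNormedField 𝕜] [NormedAddCommGroup X] [NormedSpace 𝕜 X]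
  [NormedAddCommGroup Y] [NormedSpace 𝕜 Y]

theorem ContinuousLinearMap.norm_comp_le_of_norm_comp_sub_le {L₀ L : X →L[𝕜] Y}
    {A B : Y →L[𝕜] X} (hA : L₀ ∘L A = ContinuousLinearMap.id 𝕜 Y)
    (hB : B ∘L L = ContinuousLinearMap.id 𝕜 X) {q : ℝ} (hq : ‖A ∘L (L - L₀)‖ ≤ q) (hq1 : q < 1) : ‖B ∘L L₀‖ ≤ 1 / (1 - q) := by
  refine norm_le_one_div_of_mul_one_add_eq_one ?_ norm_id_le hq hq1
  calc (B ∘L L₀) * (1 + A ∘L (L - L₀)) = B ∘L L₀ + B ∘L (L₀ ∘L A) ∘L (L - L₀) := by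
        rw [mul_add, mul_one]; rfl
    _ = 1 := by rw [hA, id_comp, comp_sub, add_sub_cancel, hB]; rfl

end

section

variable {E F : Type*} [NormedAddCommGroup E] [NormedSpace ℝ E] [NormedAddCommGroup F]
  [NormedSpace ℝ F]

theorem norm_sub_sub_fderiv_le_integral {f : E → F} {f' : E → E →L[ℝ] F} {x y : E}
    {g : ℝ → ℝ} (hf : ∀ t ∈ Icc (0 : ℝ) 1, HasFDerivAt f (f' (lineMap x y t)) (lineMap x y t))
    (hg : IntervalIntegrable g volume 0 1)
    (hbound : ∀ t ∈ Ioo (0 : ℝ) 1, ‖f' y - f' (lineMap x y t)‖ ≤ g t) :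
    ‖f y - f x - f' y (y - x)‖ ≤ (∫ t in (0 : ℝ)..1, g t) * ‖y - x‖ := by
  set φ : ℝ → F := fun t ↦ f (lineMap x y t) - t • f' y (y - x)
  have hφ : ∀ t ∈ Icc (0 : ℝ) 1,
      HasDerivAt φ (f' (lineMap x y t) (y - x) - f' y (y - x)) t := fun t ht ↦
    (((hf t ht).comp_hasDerivAt t hasDerivAt_lineMap).sub
      ((hasDerivAt_id t).smul_const (f' y (y - x)))).congr_deriv (by rw [one_smul])
  have hdisp := norm_sub_le_integral_of_norm_deriv_le_of_le (f := φ) zero_le_one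
    (fun t ht ↦ (hφ t ht).continuousAt.continuousWithinAt)
    (fun t ht ↦ (hφ t (Ioo_subset_Icc_self ht)).differentiableAt.differentiableWithinAt)
    (ae_of_all _ fun t ht ↦ by
      rw [(hφ t (Ioo_subset_Icc_self ht)).deriv, ← sub_apply, ← norm_neg, ← neg_apply, neg_sub]
      exact le_of_opNorm_le _ (hbound t ht) _)
    (hg.mul_const ‖y - x‖)
  calc ‖f y - f x - f' y (y - x)‖ = ‖φ 1 - φ 0‖ := by
        simp only [φ, lineMap_apply_one, lineMap_apply_zero, one_smul, zero_smul, sub_zero]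
        abel_nf
    _ ≤ ∫ t in (0 : ℝ)..1, g t * ‖y - x‖ := hdisp
    _ = (∫ t in (0 : ℝ)..1, g t) * ‖y - x‖ := intervalIntegral.integral_mul_const _ _

theorem norm_newton_correction_le {T : E → F} {T' : E → E →L[ℝ] F} {xs x : E}
    {A B : F →L[ℝ] E} {g : ℝ → ℝ} {q : ℝ}
    (hT : ∀ t ∈ Icc (0 : ℝ) 1, HasFDerivAt T (T' (lineMap xs x t)) (lineMap xs x t))
    (hTxs : T xs = 0) (hA : T' xs ∘L A = ContinuousLinearMap.id ℝ F)
    (hB : B ∘L T' x = ContinuousLinearMap.id ℝ E) (hq : ‖A ∘L (T' x - T' xs)‖ ≤ q) (hq1 : q < 1)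
    (hg : IntervalIntegrable g volume 0 1)
    (hbound : ∀ t ∈ Ioo (0 : ℝ) 1, ‖A ∘L (T' x - T' (lineMap xs x t))‖ ≤ g t) :
    ‖x - xs - B (T x)‖ ≤ 1 / (1 - q) * (∫ t in (0 : ℝ)..1, g t) * ‖x - xs‖ := by
  have hrem := norm_sub_sub_fderiv_le_integral (f := A ∘ T) (f' := fun u ↦ A ∘L T' u)
    (fun t ht ↦ A.hasFDerivAt.comp _ (hT t ht)) hg
    (fun t ht ↦ by rw [← comp_sub]; exact hbound t ht)
  simp only [Function.comp_apply, hTxs, map_zero, sub_zero, comp_apply] at hrem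
  have hC := norm_comp_le_of_norm_comp_sub_le hA hB hq hq1
  have hcorr : x - xs - B (T x) = (B ∘L T' xs) (A (T' x (x - xs)) - A (T x)) := by
    simp only [ContinuousLinearMap.ext_iff, comp_apply, coe_id', id_eq] at hA hB
    simp [hA, hB]
  calc ‖x - xs - B (T x)‖ ≤ ‖B ∘L T' xs‖ * ‖A (T' x (x - xs)) - A (T x)‖ :=
        hcorr ▸ le_opNorm _ _
    _ ≤ 1 / (1 - q) * ((∫ t in (0 : ℝ)..1, g t) * ‖x - xs‖) := by
        rw [norm_sub_rev]
        exact mul_le_mul hC hrem (norm_nonneg _) (hC.trans' (norm_nonneg _))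
    _ = _ := (mul_assoc _ _ _).symm

end

theorem newton_correction_estimate_general
    {X Y : Type*} [NormedAddCommGroup X] [NormedSpace ℝ X]
    [NormedAddCommGroup Y] [NormedSpace ℝ Y]
    (D : Set X) (hDconv : Convex ℝ D)
    (T : X → Y) (T' : X → X →L[ℝ] Y)
    (hT : ∀ x ∈ D, HasFDerivAt T (T' x) x)
    (xs : X) (hxs : xs ∈ D) (hTxs : T xs = 0)
    (A : Y →L[ℝ] X)
    (hA2 : (T' xs).comp A = ContinuousLinearMap.id ℝ Y)
    (ψ0 ψ : ℝ → ℝ)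
    (hψcont : ContinuousOn ψ (Ici 0))
    (hcenter : ∀ x ∈ D, ‖A.comp (T' x - T' xs)‖ ≤ ψ0 ‖x - xs‖)
    -- `D₀ = D ∩ B(x*, ρ₀)` where `ρ₀ = sup {t ≥ 0 : ψ0 t < 1}`
    (D0 : Set X)
    (hD0 : D0 = {u | u ∈ D ∧ ∃ t : ℝ, 0 ≤ t ∧ ψ0 t < 1 ∧ ‖u - xs‖ < t})
    (hrestricted : ∀ u ∈ D0, ∀ v ∈ D0, ‖A.comp (T' u - T' v)‖ ≤ ψ ‖u - v‖)
    (x : X) (hx : x ∈ D0) (a : ℝ) (ha : a = ‖x - xs‖) (hlt : ψ0 a < 1)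
    (B : Y →L[ℝ] X)
    (hB1 : B.comp (T' x) = ContinuousLinearMap.id ℝ X) :
    ‖x - xs - B (T x)‖ ≤ (1 / (1 - ψ0 a)) * (∫ t in (0:ℝ)..1, ψ ((1 - t) * a)) * a := by
  subst ha
  have hD0D : D0 ⊆ D := hD0 ▸ fun u hu ↦ hu.1
  have hseg : ∀ t ∈ Icc (0 : ℝ) 1, lineMap xs x t ∈ D0 := by
    subst hD0
    obtain ⟨hxD, r, hr0, hψr, hxr⟩ := hx
    refine fun t ht ↦ ⟨hDconv.lineMap_mem hxs hxD ht, r, hr0, hψr, ?_⟩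
    rw [← dist_eq_norm, dist_lineMap_left, Real.norm_of_nonneg ht.1, dist_eq_norm']
    exact (mul_le_of_le_one_left (norm_nonneg _) ht.2).trans_lt hxr
  have hψint : IntervalIntegrable (fun t ↦ ψ ((1 - t) * ‖x - xs‖)) volume 0 1 := by
    refine (hψcont.comp (by fun_prop) fun t ht ↦ ?_).intervalIntegrable
    rw [uIcc_of_le zero_le_one] at ht
    exact mul_nonneg (sub_nonneg.2 ht.2) (norm_nonneg _)
  refine norm_newton_correction_le (fun t ht ↦ hT _ (hD0D (hseg t ht))) hTxs hA2 hB1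
    (hcenter x (hD0D hx)) hlt hψint fun t ht ↦ ?_
  have hdist : ‖x - lineMap xs x t‖ = (1 - t) * ‖x - xs‖ := by
    rw [← dist_eq_norm, dist_comm, dist_lineMap_right, Real.norm_of_nonneg (by linarith [ht.2]),
      dist_eq_norm']
  exact hdist ▸ hrestricted x hx _ (hseg t (Ioo_subset_Icc_self ht))

/-- Newton correction estimate: if `x ∈ D₀`, `a = ‖x - x*‖`,
`ψ₀(a) < 1` (so `T'(x)` is invertible, with inverse `B`), then
`‖x - x* - T'(x)⁻¹ T(x)‖ ≤ (1/(1 - ψ₀(a))) (∫₀¹ ψ((1-t)a) dt) a`. -/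
theorem newton_correction_estimate
    {X Y : Type*} [NormedAddCommGroup X] [NormedSpace ℝ X] [CompleteSpace X]
    [NormedAddCommGroup Y] [NormedSpace ℝ Y] [CompleteSpace Y]
    (D : Set X) (hD : IsOpen D) (hDconv : Convex ℝ D)
    (T : X → Y) (T' : X → X →L[ℝ] Y)
    (hT : ∀ x ∈ D, HasFDerivAt T (T' x) x)
    (hT'cont : ContinuousOn T' D)
    (xs : X) (hxs : xs ∈ D) (hTxs : T xs = 0)
    (A : Y →L[ℝ] X)
    (hA1 : A.comp (T' xs) = ContinuousLinearMap.id ℝ X)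
    (hA2 : (T' xs).comp A = ContinuousLinearMap.id ℝ Y)
    (ψ0 ψ : ℝ → ℝ)
    (hψ0cont : ContinuousOn ψ0 (Ici 0)) (hψ0mono : MonotoneOn ψ0 (Ici 0))
    (hψ0zero : ψ0 0 = 0) (hψ0nonneg : ∀ t, 0 ≤ t → 0 ≤ ψ0 t)
    (hψcont : ContinuousOn ψ (Ici 0)) (hψmono : MonotoneOn ψ (Ici 0))
    (hψzero : ψ 0 = 0) (hψnonneg : ∀ t, 0 ≤ t → 0 ≤ ψ t)
    (hcenter : ∀ x ∈ D, ‖A.comp (T' x - T' xs)‖ ≤ ψ0 ‖x - xs‖)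
    -- `D₀ = D ∩ B(x*, ρ₀)` where `ρ₀ = sup {t ≥ 0 : ψ₀ t < 1}`
    (D0 : Set X)
    (hD0 : D0 = {u | u ∈ D ∧ ∃ t : ℝ, 0 ≤ t ∧ ψ0 t < 1 ∧ ‖u - xs‖ < t})
    (hrestricted : ∀ u ∈ D0, ∀ v ∈ D0, ‖A.comp (T' u - T' v)‖ ≤ ψ ‖u - v‖)
    (x : X) (hx : x ∈ D0) (a : ℝ) (ha : a = ‖x - xs‖) (hlt : ψ0 a < 1)
    (B : Y →L[ℝ] X)
    (hB1 : B.comp (T' x) = ContinuousLinearMap.id ℝ X)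
    (hB2 : (T' x).comp B = ContinuousLinearMap.id ℝ Y) :
    ‖x - xs - B (T x)‖ ≤ (1 / (1 - ψ0 a)) * (∫ t in (0:ℝ)..1, ψ ((1 - t) * a)) * a :=
  newton_correction_estimate_general D hDconv T T' hT xs hxs hTxs A hA2 ψ0 ψ hψcont hcenter D0 hD0
    hrestricted x hx a ha hlt B hB1
end

section
/- Let x ∈ D₀ with a = ‖x − x*‖ and ψ₀(a) < 1, so that T′(x) is invertible, and set y = x − (1/2)T′(x)⁻¹T(x). Then ‖y − x*‖ ≤ (1/(1 − ψ₀(a))) · [ (1/2)∫₀¹(ψ₀(t a) + 1) dt + ∫₀¹ ψ((1−t)a) dt ] · a. -/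
/-!
Put `u = y - x*` and `A = T'(x*)⁻¹`. Since `T'(x)` has the right inverse `T'(x)⁻¹`,
`T'(x) u = T'(x)(x - x*) - ½ T(x)`, and since `‖A T'(x) - I‖ ≤ ψ₀(a) < 1`,
`‖u‖ ≤ ‖A T'(x) u‖ / (1 - ψ₀(a))`. Using `T(x*) = 0`,
`A T'(x) u = ½ A (T x - T x*) - A (T x - T x* - T'(x)(x - x*))`, and both terms are bounded by
the integral form of the mean value inequality on the segment `[x*, x]`, which lies in `D₀`:
along it the derivative of `A ∘ T` has norm at most `ψ₀(t a) + 1` (center condition) and that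
of `A ∘ T - A T'(x)` has norm at most `ψ((1 - t) a)` (restricted condition).
-/

open Set intervalIntegral

theorem norm_sub_le_integral_of_norm_deriv_le {E : Type*} [NormedAddCommGroup E]
    [NormedSpace ℝ E] {f f' : ℝ → E} {φ : ℝ → ℝ} {a b : ℝ} (hab : a ≤ b)
    (hf : ∀ t ∈ Icc a b, HasDerivAt f (f' t) t) (hφ : ContinuousOn φ (Icc a b))
    (bound : ∀ t ∈ Ico a b, ‖f' t‖ ≤ φ t) :
    ‖f b - f a‖ ≤ ∫ t in a..b, φ t := by
  have hprimitive : ∀ t ∈ Icc a b,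
      HasDerivWithinAt (fun u => ∫ s in a..u, φ s) (φ t) (Icc a b) t := fun t ht => by
    have := Fact.mk ht
    exact integral_hasDerivWithinAt_right
      ((hφ.mono (Icc_subset_Icc le_rfl ht.2)).intervalIntegrable_of_Icc ht.1)
      (hφ.stronglyMeasurableAtFilter_nhdsWithin measurableSet_Icc t) (hφ t ht)
  refine image_norm_le_of_norm_deriv_right_le_deriv_boundary' (f := fun t => f t - f a)
    (fun t ht => (hf t ht).continuousAt.continuousWithinAt.sub continuousWithinAt_const)
    (fun t ht => ((hf t (Ico_subset_Icc_self ht)).sub_const (f a)).hasDerivWithinAt)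
    (by simp) (fun t ht => (hprimitive t ht).continuousWithinAt)
    (fun t ht => (hprimitive t (Ico_subset_Icc_self ht)).mono_of_mem_nhdsWithin
      (Icc_mem_nhdsGE_of_mem ht)) bound (right_mem_Icc.2 hab)

theorem norm_image_sub_le_integral_mul_of_norm_hasFDerivAt_le {E F : Type*}
    [NormedAddCommGroup E] [NormedSpace ℝ E] [NormedAddCommGroup F] [NormedSpace ℝ F]
    {f : E → F} {f' : E → E →L[ℝ] F} {φ : ℝ → ℝ} {a b : E}
    (hf : ∀ t ∈ Icc (0 : ℝ) 1,
      HasFDerivAt f (f' (AffineMap.lineMap a b t)) (AffineMap.lineMap a b t))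
    (hφ : ContinuousOn φ (Icc 0 1))
    (bound : ∀ t ∈ Icc (0 : ℝ) 1, ‖f' (AffineMap.lineMap a b t)‖ ≤ φ t) :
    ‖f b - f a‖ ≤ (∫ t in (0 : ℝ)..1, φ t) * ‖b - a‖ := by
  rw [← intervalIntegral.integral_mul_const]
  simpa using norm_sub_le_integral_of_norm_deriv_le zero_le_one
    (fun t ht => (hf t ht).comp_hasDerivAt t AffineMap.hasDerivAt_lineMap)
    (hφ.mul continuousOn_const)
    (fun t ht => (ContinuousLinearMap.le_opNorm _ _).trans
      (mul_le_mul_of_nonneg_right (bound t (Ico_subset_Icc_self ht)) (norm_nonneg _)))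

section Perturbation

variable {𝕜 X Y : Type*} [NontriviallyNormedField 𝕜] [NormedAddCommGroup X] [NormedSpace 𝕜 X]
  [NormedAddCommGroup Y] [NormedSpace 𝕜 Y] {A : Y →L[𝕜] X} {L L₀ : X →L[𝕜] Y}

theorem norm_comp_le_norm_comp_sub_add_one (hA : A.comp L₀ = ContinuousLinearMap.id 𝕜 X) :
    ‖A.comp L‖ ≤ ‖A.comp (L - L₀)‖ + 1 := calc
  ‖A.comp L‖ = ‖A.comp (L - L₀) + ContinuousLinearMap.id 𝕜 X‖ := by
    rw [ContinuousLinearMap.comp_sub, hA, sub_add_cancel]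
  _ ≤ ‖A.comp (L - L₀)‖ + 1 :=
    (norm_add_le _ _).trans (by gcongr; exact ContinuousLinearMap.norm_id_le)

theorem norm_le_div_of_comp_eq_id_of_norm_comp_sub_le {q : ℝ}
    (hA : A.comp L₀ = ContinuousLinearMap.id 𝕜 X) (hq : ‖A.comp (L - L₀)‖ ≤ q) (hq1 : q < 1)
    (u : X) : ‖u‖ ≤ ‖A (L u)‖ / (1 - q) := by
  have hsplit : A (L u) = u + A.comp (L - L₀) u := by
    simp [hA]
  have : ‖u‖ ≤ ‖A (L u)‖ + q * ‖u‖ := calc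
    ‖u‖ = ‖A (L u) - A.comp (L - L₀) u‖ := by rw [hsplit, add_sub_cancel_right]
    _ ≤ ‖A (L u)‖ + ‖A.comp (L - L₀) u‖ := norm_sub_le _ _
    _ ≤ ‖A (L u)‖ + q * ‖u‖ := by
      gcongr; exact (ContinuousLinearMap.le_opNorm _ _).trans (by gcongr)
  rw [le_div_iff₀ (by linarith)]
  linarith

end Perturbation

section Segment

variable {X Y : Type*} [NormedAddCommGroup X] [NormedSpace ℝ X]
  [NormedAddCommGroup Y] [NormedSpace ℝ Y]
  {T : X → Y} {T' : X → X →L[ℝ] Y} {A : Y →L[ℝ] X} {s : Set X} {x₀ x : X}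

theorem norm_map_sub_le_integral_of_center_bound {ψ₀ : ℝ → ℝ}
    (hT : ∀ z ∈ s, HasFDerivAt T (T' z) z) (hA : A.comp (T' x₀) = ContinuousLinearMap.id ℝ X)
    (hcenter : ∀ z ∈ s, ‖A.comp (T' z - T' x₀)‖ ≤ ψ₀ ‖z - x₀‖)
    (hψ₀ : ContinuousOn ψ₀ (Ici 0)) (hseg : segment ℝ x₀ x ⊆ s) :
    ‖A (T x) - A (T x₀)‖ ≤ (∫ t in (0:ℝ)..1, (ψ₀ (t * ‖x - x₀‖) + 1)) * ‖x - x₀‖ := by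
  have hz : ∀ t ∈ Icc (0 : ℝ) 1, AffineMap.lineMap x₀ x t ∈ s := fun t ht =>
    hseg (lineMap_mem_segment ℝ x₀ x ht)
  refine norm_image_sub_le_integral_mul_of_norm_hasFDerivAt_le (f := fun u => A (T u))
    (f' := fun u => A.comp (T' u)) (fun t ht => A.hasFDerivAt.comp _ (hT _ (hz t ht)))
    ((hψ₀.comp (continuousOn_id.mul continuousOn_const)
      fun t ht => mul_nonneg ht.1 (norm_nonneg _)).add continuousOn_const) fun t ht => ?_
  refine (norm_comp_le_norm_comp_sub_add_one hA).trans ?_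
  grw [hcenter _ (hz t ht), ← dist_eq_norm, dist_lineMap_left, Real.norm_of_nonneg ht.1,
    dist_eq_norm']

theorem norm_map_sub_sub_le_integral_of_restricted_bound {ψ : ℝ → ℝ}
    (hT : ∀ z ∈ s, HasFDerivAt T (T' z) z)
    (hrestricted : ∀ z ∈ s, ‖A.comp (T' z - T' x)‖ ≤ ψ ‖z - x‖)
    (hψ : ContinuousOn ψ (Ici 0)) (hseg : segment ℝ x₀ x ⊆ s) :
    ‖(A (T x) - A (T' x x)) - (A (T x₀) - A (T' x x₀))‖
      ≤ (∫ t in (0:ℝ)..1, ψ ((1 - t) * ‖x - x₀‖)) * ‖x - x₀‖ := by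
  have hz : ∀ t ∈ Icc (0 : ℝ) 1, AffineMap.lineMap x₀ x t ∈ s := fun t ht =>
    hseg (lineMap_mem_segment ℝ x₀ x ht)
  refine norm_image_sub_le_integral_mul_of_norm_hasFDerivAt_le
    (f := fun u => A (T u) - A (T' x u)) (f' := fun u => A.comp (T' u - T' x))
    (fun t ht => ?_) (hψ.comp ((continuousOn_const.sub continuousOn_id).mul continuousOn_const)
      fun t ht => mul_nonneg (sub_nonneg.2 ht.2) (norm_nonneg _)) fun t ht => ?_
  · rw [ContinuousLinearMap.comp_sub]
    exact (A.hasFDerivAt.comp _ (hT _ (hz t ht))).sub (A.comp (T' x)).hasFDerivAt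
  · grw [hrestricted _ (hz t ht), ← dist_eq_norm, dist_lineMap_right,
      Real.norm_of_nonneg (sub_nonneg.2 ht.2), dist_eq_norm']

end Segment

theorem starConvex_setOf_mem_and_exists_norm_sub_lt {X : Type*} [NormedAddCommGroup X]
    [NormedSpace ℝ X] {D : Set X} (hD : Convex ℝ D) {x₀ : X} (hx₀ : x₀ ∈ D) (ψ₀ : ℝ → ℝ) :
    StarConvex ℝ x₀ {u | u ∈ D ∧ ∃ t : ℝ, 0 ≤ t ∧ ψ₀ t < 1 ∧ ‖u - x₀‖ < t} := by
  rintro u ⟨huD, t, ht0, ht1, hut⟩ c d hc hd hcd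
  refine ⟨hD.starConvex hx₀ huD hc hd hcd, t, ht0, ht1, ?_⟩
  have : c • x₀ + d • u - x₀ = d • (u - x₀) := by
    rw [eq_sub_of_add_eq hcd]; module
  rw [this, norm_smul, Real.norm_of_nonneg hd]
  nlinarith [norm_nonneg (u - x₀)]

theorem first_substep_estimate_general
    {X Y : Type*} [NormedAddCommGroup X] [NormedSpace ℝ X]
    [NormedAddCommGroup Y] [NormedSpace ℝ Y]
    (D : Set X) (hDconv : Convex ℝ D)
    (T : X → Y) (T' : X → X →L[ℝ] Y)
    (hT : ∀ x ∈ D, HasFDerivAt T (T' x) x)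
    (xs : X) (hxs : xs ∈ D) (hTxs : T xs = 0)
    (A : Y →L[ℝ] X)
    (hA1 : A.comp (T' xs) = ContinuousLinearMap.id ℝ X)
    (ψ0 ψ : ℝ → ℝ)
    (hψ0cont : ContinuousOn ψ0 (Ici 0))
    (hψcont : ContinuousOn ψ (Ici 0))
    (hcenter : ∀ x ∈ D, ‖A.comp (T' x - T' xs)‖ ≤ ψ0 ‖x - xs‖)
    -- `D₀ = D ∩ B(x*, ρ₀)` where `ρ₀ = sup {t ≥ 0 : ψ₀ t < 1}`
    (D0 : Set X)
    (hD0 : D0 = {u | u ∈ D ∧ ∃ t : ℝ, 0 ≤ t ∧ ψ0 t < 1 ∧ ‖u - xs‖ < t})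
    (hrestricted : ∀ u ∈ D0, ∀ v ∈ D0, ‖A.comp (T' u - T' v)‖ ≤ ψ ‖u - v‖)
    (x : X) (hx : x ∈ D0) (a : ℝ) (ha : a = ‖x - xs‖) (hlt : ψ0 a < 1)
    (B : Y →L[ℝ] X)
    (hB2 : (T' x).comp B = ContinuousLinearMap.id ℝ Y)
    (y : X) (hy : y = x - (1 / 2 : ℝ) • B (T x)) :
    ‖y - xs‖ ≤ (1 / (1 - ψ0 a)) *
      ((1 / 2) * (∫ t in (0:ℝ)..1, (ψ0 (t * a) + 1)) +
        ∫ t in (0:ℝ)..1, ψ ((1 - t) * a)) * a := by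
  subst hD0
  have hseg := (starConvex_setOf_mem_and_exists_norm_sub_lt hDconv hxs ψ0).segment_subset hx
  have hresidual := norm_map_sub_le_integral_of_center_bound (fun z hz => hT z hz.1) hA1
    (fun z hz => hcenter z hz.1) hψ0cont hseg
  have hlinearization := norm_map_sub_sub_le_integral_of_restricted_bound
    (fun z hz => hT z hz.1) (fun z hz => hrestricted z hz x hx) hψcont hseg
  rw [← ha] at hresidual hlinearization
  have hstep : T' x (y - xs) = T' x (x - xs) - (1 / 2 : ℝ) • T x := by
    rw [hy, sub_right_comm, map_sub, map_smul, ← ContinuousLinearMap.comp_apply, hB2,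
      ContinuousLinearMap.id_apply]
  have hsplit : A (T' x (y - xs)) = (1 / 2 : ℝ) • (A (T x) - A (T xs))
      - ((A (T x) - A (T' x x)) - (A (T xs) - A (T' x xs))) := by
    rw [hstep, hTxs]
    simp only [map_sub, map_smul, map_zero]
    module
  calc ‖y - xs‖ ≤ ‖A (T' x (y - xs))‖ / (1 - ψ0 a) :=
        norm_le_div_of_comp_eq_id_of_norm_comp_sub_le hA1
          ((hcenter x hx.1).trans_eq (by rw [ha])) hlt _
    _ ≤ ((1 / 2) * ((∫ t in (0:ℝ)..1, (ψ0 (t * a) + 1)) * a)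
          + (∫ t in (0:ℝ)..1, ψ ((1 - t) * a)) * a) / (1 - ψ0 a) := by
        gcongr
        rw [hsplit]
        refine (norm_sub_le _ _).trans (add_le_add ?_ hlinearization)
        rw [norm_smul, Real.norm_of_nonneg (by norm_num)]
        gcongr
    _ = _ := by ring

/-- Estimate for the first sub-step `y = x - (1/2) T'(x)⁻¹ T(x)`:
`‖y - x*‖ ≤ (1/(1-ψ₀(a))) [ (1/2)∫₀¹(ψ₀(ta)+1)dt + ∫₀¹ψ((1-t)a)dt ] a`. -/
theorem first_substep_estimate
    {X Y : Type*} [NormedAddCommGroup X] [NormedSpace ℝ X] [CompleteSpace X]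
    [NormedAddCommGroup Y] [NormedSpace ℝ Y] [CompleteSpace Y]
    (D : Set X) (hD : IsOpen D) (hDconv : Convex ℝ D)
    (T : X → Y) (T' : X → X →L[ℝ] Y)
    (hT : ∀ x ∈ D, HasFDerivAt T (T' x) x)
    (hT'cont : ContinuousOn T' D)
    (xs : X) (hxs : xs ∈ D) (hTxs : T xs = 0)
    (A : Y →L[ℝ] X)
    (hA1 : A.comp (T' xs) = ContinuousLinearMap.id ℝ X)
    (hA2 : (T' xs).comp A = ContinuousLinearMap.id ℝ Y)
    (ψ0 ψ : ℝ → ℝ)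
    (hψ0cont : ContinuousOn ψ0 (Ici 0)) (hψ0mono : MonotoneOn ψ0 (Ici 0))
    (hψ0zero : ψ0 0 = 0) (hψ0nonneg : ∀ t, 0 ≤ t → 0 ≤ ψ0 t)
    (hψcont : ContinuousOn ψ (Ici 0)) (hψmono : MonotoneOn ψ (Ici 0))
    (hψzero : ψ 0 = 0) (hψnonneg : ∀ t, 0 ≤ t → 0 ≤ ψ t)
    (hcenter : ∀ x ∈ D, ‖A.comp (T' x - T' xs)‖ ≤ ψ0 ‖x - xs‖)
    -- `D₀ = D ∩ B(x*, ρ₀)` where `ρ₀ = sup {t ≥ 0 : ψ₀ t < 1}`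
    (D0 : Set X)
    (hD0 : D0 = {u | u ∈ D ∧ ∃ t : ℝ, 0 ≤ t ∧ ψ0 t < 1 ∧ ‖u - xs‖ < t})
    (hrestricted : ∀ u ∈ D0, ∀ v ∈ D0, ‖A.comp (T' u - T' v)‖ ≤ ψ ‖u - v‖)
    (x : X) (hx : x ∈ D0) (a : ℝ) (ha : a = ‖x - xs‖) (hlt : ψ0 a < 1)
    (B : Y →L[ℝ] X)
    (hB1 : B.comp (T' x) = ContinuousLinearMap.id ℝ X)
    (hB2 : (T' x).comp B = ContinuousLinearMap.id ℝ Y)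
    (y : X) (hy : y = x - (1 / 2 : ℝ) • B (T x)) :
    ‖y - xs‖ ≤ (1 / (1 - ψ0 a)) *
      ((1 / 2) * (∫ t in (0:ℝ)..1, (ψ0 (t * a) + 1)) +
        ∫ t in (0:ℝ)..1, ψ ((1 - t) * a)) * a :=
  first_substep_estimate_general D hDconv T T' hT xs hxs hTxs A hA1 ψ0 ψ hψ0cont hψcont hcenter D0
    hD0 hrestricted x hx a ha hlt B hB2 y hy
end

section
/- Let x, y ∈ D₀ with a = ‖x − x*‖, ψ₀(a) < 1 and ψ₀(‖y − x*‖) < 1, so that T′(x) and T′(y) are invertible, and set z = x − T′(y)⁻¹T(x). Then ‖z − x*‖ ≤ (1/(1 − ψ₀(a))) · [ ∫₀¹ ψ((1−t)a) dt + (ψ(‖y − x*‖) + ψ(a)) · (∫₀¹(ψ₀(t a) + 1) dt)/(1 − ψ₀(‖y − x*‖)) ] · a. -/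
/-!
Write `z - x* = T'(x)⁻¹ (T'(x)(x - x*) - T(x)) + T'(y)⁻¹ (T'(y) - T'(x)) T'(x)⁻¹ T(x)`.
Banach's perturbation lemma bounds `T'(x)⁻¹` and `T'(y)⁻¹` by `1/(1 - ψ₀)` relative to
`T'(x*)⁻¹`. Both `T(x) = T(x) - T(x*)` and the Newton remainder `T'(x)(x - x*) - T(x)` are
integrals of `T'` along the segment `[x*, x]`, which lies in `D₀`; the center and restricted
conditions bound their integrands by `ψ₀(t a) + 1` and `ψ((1 - t) a)`. Finally
`‖T'(x*)⁻¹ (T'(y) - T'(x))‖ ≤ ψ(‖y - x*‖) + ψ(a)` by passing through `x*`.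
-/

open Set intervalIntegral AffineMap

section Segment

variable {E F : Type*} [NormedAddCommGroup E] [NormedSpace ℝ E]
  [NormedAddCommGroup F] [NormedSpace ℝ F]

theorem norm_lineMap_sub_left (x y : E) {t : ℝ} (ht : 0 ≤ t) :
    ‖lineMap x y t - x‖ = t * ‖y - x‖ := by
  rw [lineMap_apply_module', add_sub_cancel_right, norm_smul, Real.norm_of_nonneg ht]

theorem norm_sub_lineMap_right (x y : E) {t : ℝ} (ht : t ≤ 1) :
    ‖y - lineMap x y t‖ = (1 - t) * ‖y - x‖ := by
  rw [lineMap_apply_module', show y - (t • (y - x) + x) = (1 - t) • (y - x) by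
    rw [sub_smul, one_smul]; abel, norm_smul, Real.norm_of_nonneg (by linarith)]

theorem norm_sub_sub_le_integral_mul {f : E → F} {f' : ℝ → E →L[ℝ] F} {x y : E}
    (hf : ∀ t ∈ Icc (0 : ℝ) 1, HasFDerivAt f (f' t) (lineMap x y t)) (L : E →L[ℝ] F)
    {φ : ℝ → ℝ} (hφ : IntervalIntegrable φ MeasureTheory.volume 0 1)
    (hbound : ∀ t ∈ Icc (0 : ℝ) 1, ‖f' t - L‖ ≤ φ t) :
    ‖f y - f x - L (y - x)‖ ≤ (∫ t in (0 : ℝ)..1, φ t) * ‖y - x‖ := by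
  set g : ℝ → F := fun t => f (lineMap x y t) - t • L (y - x)
  have hg : ∀ t ∈ Icc (0 : ℝ) 1, HasDerivAt g ((f' t - L) (y - x)) t := fun t ht =>
    ((hf t ht).comp_hasDerivAt t hasDerivAt_lineMap).sub
      (by simpa using (hasDerivAt_id t).smul_const (L (y - x)))
  have hgy : g 1 - g 0 = f y - f x - L (y - x) := by simp [g]; abel
  rw [← hgy, ← integral_mul_const]
  refine norm_sub_le_integral_of_norm_deriv_le_of_le zero_le_one
    (fun t ht => (hg t ht).continuousAt.continuousWithinAt)
    (fun t ht => (hg t (Ioo_subset_Icc_self ht)).differentiableAt.differentiableWithinAt)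
    (MeasureTheory.ae_of_all _ fun t ht => ?_) (hφ.mul_const _)
  rw [(hg t (Ioo_subset_Icc_self ht)).deriv]
  exact ((f' t - L).le_opNorm _).trans <| by
    gcongr; exact hbound t (Ioo_subset_Icc_self ht)

end Segment

theorem ContinuousOn.intervalIntegrable_comp_of_nonneg {ψ g : ℝ → ℝ}
    (hψ : ContinuousOn ψ (Ici 0)) (hg : Continuous g) (hg0 : ∀ t ∈ Icc (0 : ℝ) 1, 0 ≤ g t) :
    IntervalIntegrable (fun t => ψ (g t)) MeasureTheory.volume 0 1 :=
  ContinuousOn.intervalIntegrable <| by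
    rw [uIcc_of_le zero_le_one]; exact hψ.comp hg.continuousOn hg0

section Operators

variable {X Y : Type*} [NormedAddCommGroup X] [NormedSpace ℝ X]
  [NormedAddCommGroup Y] [NormedSpace ℝ Y]

/-- Banach's perturbation lemma: `M = B S₀` satisfies `M = 1 - M A (S - S₀)`,
hence `‖M‖ ≤ 1 + c ‖M‖`. -/
theorem norm_leftInverse_apply_le (A B : Y →L[ℝ] X) (S S₀ : X →L[ℝ] Y)
    (hB : B.comp S = ContinuousLinearMap.id ℝ X) (hA : S₀.comp A = ContinuousLinearMap.id ℝ Y)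
    {c : ℝ} (hc : ‖A.comp (S - S₀)‖ ≤ c) (hc1 : c < 1) (w : Y) :
    ‖B w‖ ≤ ‖A w‖ / (1 - c) := by
  set M := B.comp S₀
  have hMA : M.comp A = B := by
    rw [ContinuousLinearMap.comp_assoc, hA, ContinuousLinearMap.comp_id]
  have hM : M = ContinuousLinearMap.id ℝ X - M.comp (A.comp (S - S₀)) := by
    rw [← ContinuousLinearMap.comp_assoc, hMA, ContinuousLinearMap.comp_sub, hB]; abel
  have hMnorm : ‖M‖ * (1 - c) ≤ 1 := by
    have : ‖M‖ ≤ 1 + ‖M‖ * c := calc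
      ‖M‖ ≤ ‖ContinuousLinearMap.id ℝ X‖ + ‖M.comp (A.comp (S - S₀))‖ := by
        conv_lhs => rw [hM]
        exact norm_sub_le _ _
      _ ≤ 1 + ‖M‖ * c := add_le_add ContinuousLinearMap.norm_id_le
        ((M.opNorm_comp_le _).trans (by gcongr))
    linarith
  rw [le_div_iff₀ (by linarith), ← hMA]
  calc ‖M (A w)‖ * (1 - c) ≤ ‖M‖ * ‖A w‖ * (1 - c) := by
        exact mul_le_mul_of_nonneg_right (M.le_opNorm _) (by linarith)
    _ = ‖M‖ * (1 - c) * ‖A w‖ := by ring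
    _ ≤ ‖A w‖ := mul_le_of_le_one_left (norm_nonneg _) hMnorm

theorem sub_apply_eq_of_inverses {Bx By : Y →L[ℝ] X} {Sx Sy : X →L[ℝ] Y}
    (hBx₁ : Bx.comp Sx = ContinuousLinearMap.id ℝ X)
    (hBx₂ : Sx.comp Bx = ContinuousLinearMap.id ℝ Y)
    (hBy : By.comp Sy = ContinuousLinearMap.id ℝ X) (v : X) (w : Y) :
    v - By w = Bx (Sx v - w) + By ((Sy - Sx) (Bx w)) := by
  have h₁ := DFunLike.congr_fun hBx₁ v
  have h₂ := DFunLike.congr_fun hBx₂ w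
  have h₃ := DFunLike.congr_fun hBy (Bx w)
  simp only [ContinuousLinearMap.comp_apply, ContinuousLinearMap.id_apply] at h₁ h₂ h₃
  simp only [map_sub, sub_apply, h₁, h₂, h₃]
  abel

theorem norm_sub_apply_le_of_inverses {A Bx By : Y →L[ℝ] X} {Sx Sy : X →L[ℝ] Y}
    (hBx₁ : Bx.comp Sx = ContinuousLinearMap.id ℝ X)
    (hBx₂ : Sx.comp Bx = ContinuousLinearMap.id ℝ Y)
    (hBy₁ : By.comp Sy = ContinuousLinearMap.id ℝ X) {p q R W K : ℝ} (hp : 0 < p) (hq : 0 < q)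
    (hBx : ∀ u, ‖Bx u‖ ≤ ‖A u‖ / p) (hBy : ∀ u, ‖By u‖ ≤ ‖A u‖ / q) {v : X} {w : Y}
    (hR : ‖A (Sx v - w)‖ ≤ R) (hW : ‖A w‖ ≤ W) (hK : ‖A.comp (Sy - Sx)‖ ≤ K) :
    ‖v - By w‖ ≤ R / p + K * (W / p) / q := by
  have hcorr : ‖A ((Sy - Sx) (Bx w))‖ ≤ K * (W / p) :=
    ((A.comp _).le_opNorm _).trans <| mul_le_mul hK
      ((hBx w).trans (by gcongr)) (norm_nonneg _) ((norm_nonneg _).trans hK)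
  calc ‖v - By w‖ = ‖Bx (Sx v - w) + By ((Sy - Sx) (Bx w))‖ := by
        rw [sub_apply_eq_of_inverses hBx₁ hBx₂ hBy₁]
    _ ≤ ‖A (Sx v - w)‖ / p + ‖A ((Sy - Sx) (Bx w))‖ / q :=
      (norm_add_le _ _).trans (add_le_add (hBx _) (hBy _))
    _ ≤ R / p + K * (W / p) / q := by gcongr

end Operators

section Newton

variable {X Y : Type*} [NormedAddCommGroup X] [NormedSpace ℝ X]
  [NormedAddCommGroup Y] [NormedSpace ℝ Y]
  {T : X → Y} {T' : X → X →L[ℝ] Y} {A : Y →L[ℝ] X} {xs x : X}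

theorem norm_apply_le_integral_of_center_bound {ψ0 : ℝ → ℝ}
    (hT : ∀ t ∈ Icc (0 : ℝ) 1, HasFDerivAt T (T' (lineMap xs x t)) (lineMap xs x t))
    (hTxs : T xs = 0) (hA : A.comp (T' xs) = ContinuousLinearMap.id ℝ X)
    (hψ0 : ContinuousOn ψ0 (Ici 0))
    (hcenter : ∀ t ∈ Icc (0 : ℝ) 1,
      ‖A.comp (T' (lineMap xs x t) - T' xs)‖ ≤ ψ0 ‖lineMap xs x t - xs‖) :
    ‖A (T x)‖ ≤ (∫ t in (0 : ℝ)..1, (ψ0 (t * ‖x - xs‖) + 1)) * ‖x - xs‖ := by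
  have hint : IntervalIntegrable (fun t => ψ0 (t * ‖x - xs‖) + 1) MeasureTheory.volume 0 1 :=
    (hψ0.intervalIntegrable_comp_of_nonneg (by fun_prop)
      fun t ht => mul_nonneg ht.1 (norm_nonneg (x - xs))).add intervalIntegrable_const
  simpa [hTxs] using norm_sub_sub_le_integral_mul (fun t ht => A.hasFDerivAt.comp _ (hT t ht))
    0 hint fun t ht => calc
      ‖A.comp (T' (lineMap xs x t)) - 0‖
          = ‖A.comp (T' (lineMap xs x t) - T' xs) + ContinuousLinearMap.id ℝ X‖ := by
        rw [sub_zero, ← hA, ← ContinuousLinearMap.comp_add, sub_add_cancel]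
      _ ≤ ψ0 (t * ‖x - xs‖) + 1 := by
        refine (norm_add_le _ _).trans (add_le_add ?_ ContinuousLinearMap.norm_id_le)
        rw [← norm_lineMap_sub_left xs x ht.1]
        exact hcenter t ht

theorem norm_apply_newton_remainder_le_integral {ψ : ℝ → ℝ}
    (hT : ∀ t ∈ Icc (0 : ℝ) 1, HasFDerivAt T (T' (lineMap xs x t)) (lineMap xs x t))
    (hTxs : T xs = 0) (hψ : ContinuousOn ψ (Ici 0))
    (hrestricted : ∀ t ∈ Icc (0 : ℝ) 1,
      ‖A.comp (T' x - T' (lineMap xs x t))‖ ≤ ψ ‖x - lineMap xs x t‖) :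
    ‖A (T' x (x - xs) - T x)‖ ≤ (∫ t in (0 : ℝ)..1, ψ ((1 - t) * ‖x - xs‖)) * ‖x - xs‖ := by
  have hint : IntervalIntegrable (fun t => ψ ((1 - t) * ‖x - xs‖)) MeasureTheory.volume 0 1 :=
    hψ.intervalIntegrable_comp_of_nonneg (by fun_prop)
      fun t ht => mul_nonneg (sub_nonneg.2 ht.2) (norm_nonneg (x - xs))
  have := norm_sub_sub_le_integral_mul (fun t ht => A.hasFDerivAt.comp _ (hT t ht))
    (A.comp (T' x)) hint fun t ht => by
      rw [norm_sub_rev, ← ContinuousLinearMap.comp_sub, ← norm_sub_lineMap_right xs x ht.2]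
      exact hrestricted t ht
  simp only [Function.comp_apply, hTxs, map_zero, sub_zero, ContinuousLinearMap.comp_apply] at this
  rwa [map_sub, norm_sub_rev]

end Newton

theorem second_substep_estimate_general
    {X Y : Type*} [NormedAddCommGroup X] [NormedSpace ℝ X]
    [NormedAddCommGroup Y] [NormedSpace ℝ Y]
    (D : Set X) (hDconv : Convex ℝ D)
    (T : X → Y) (T' : X → X →L[ℝ] Y)
    (hT : ∀ x ∈ D, HasFDerivAt T (T' x) x)
    (xs : X) (hxs : xs ∈ D) (hTxs : T xs = 0)
    (A : Y →L[ℝ] X)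
    (hA1 : A.comp (T' xs) = ContinuousLinearMap.id ℝ X)
    (hA2 : (T' xs).comp A = ContinuousLinearMap.id ℝ Y)
    (ψ0 ψ : ℝ → ℝ)
    (hψ0cont : ContinuousOn ψ0 (Ici 0))
    (hψcont : ContinuousOn ψ (Ici 0))
    (hcenter : ∀ x ∈ D, ‖A.comp (T' x - T' xs)‖ ≤ ψ0 ‖x - xs‖)
    -- `D₀ = D ∩ B(x*, ρ₀)` where `ρ₀ = sup {t ≥ 0 : ψ₀ t < 1}`
    (D0 : Set X)
    (hD0 : D0 = {u | u ∈ D ∧ ∃ t : ℝ, 0 ≤ t ∧ ψ0 t < 1 ∧ ‖u - xs‖ < t})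
    (hrestricted : ∀ u ∈ D0, ∀ v ∈ D0, ‖A.comp (T' u - T' v)‖ ≤ ψ ‖u - v‖)
    (x : X) (hx : x ∈ D0) (y : X) (hyD0 : y ∈ D0)
    (a : ℝ) (ha : a = ‖x - xs‖)
    (hltx : ψ0 a < 1) (hlty : ψ0 ‖y - xs‖ < 1)
    (Bx : Y →L[ℝ] X)
    (hBx1 : Bx.comp (T' x) = ContinuousLinearMap.id ℝ X)
    (hBx2 : (T' x).comp Bx = ContinuousLinearMap.id ℝ Y)
    (By : Y →L[ℝ] X)
    (hBy1 : By.comp (T' y) = ContinuousLinearMap.id ℝ X)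
    (z : X) (hz : z = x - By (T x)) :
    ‖z - xs‖ ≤ (1 / (1 - ψ0 a)) *
      ((∫ t in (0:ℝ)..1, ψ ((1 - t) * a)) +
        (ψ ‖y - xs‖ + ψ a) * (∫ t in (0:ℝ)..1, (ψ0 (t * a) + 1)) /
          (1 - ψ0 ‖y - xs‖)) * a := by
  obtain ⟨hxD, r, hr0, hψ0r, hxr⟩ := (Set.ext_iff.mp hD0 x).1 hx
  have hseg : ∀ t ∈ Icc (0 : ℝ) 1, lineMap xs x t ∈ D := fun t ht =>
    hDconv.lineMap_mem hxs hxD ht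
  have hsegD0 : ∀ t ∈ Icc (0 : ℝ) 1, lineMap xs x t ∈ D0 := fun t ht => by
    refine (Set.ext_iff.mp hD0 _).2 ⟨hseg t ht, r, hr0, hψ0r, ?_⟩
    rw [norm_lineMap_sub_left xs x ht.1]
    nlinarith [ht.2, norm_nonneg (x - xs)]
  have hxsD0 := lineMap_apply_zero (k := ℝ) xs x ▸ hsegD0 0 ⟨le_rfl, zero_le_one⟩
  have hTseg : ∀ t ∈ Icc (0 : ℝ) 1, HasFDerivAt T (T' (lineMap xs x t)) (lineMap xs x t) :=
    fun t ht => hT _ (hseg t ht)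
  have hATx := ha ▸ norm_apply_le_integral_of_center_bound hTseg hTxs hA1 hψ0cont
    fun t ht => hcenter _ (hseg t ht)
  have hrem := ha ▸ norm_apply_newton_remainder_le_integral hTseg hTxs hψcont
    fun t ht => hrestricted x hx _ (hsegD0 t ht)
  have hBx := norm_leftInverse_apply_le A Bx (T' x) (T' xs) hBx1 hA2
    (ha ▸ hcenter x hxD) hltx
  have hBy := norm_leftInverse_apply_le A By (T' y) (T' xs) hBy1 hA2
    (hcenter y ((Set.ext_iff.mp hD0 y).1 hyD0).1) hlty
  have hdiff : ‖A.comp (T' y - T' x)‖ ≤ ψ ‖y - xs‖ + ψ a := calc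
    ‖A.comp (T' y - T' x)‖ ≤ ‖A.comp (T' y - T' xs)‖ + ‖A.comp (T' xs - T' x)‖ := by
      rw [← sub_add_sub_cancel (T' y) (T' xs) (T' x), ContinuousLinearMap.comp_add]
      exact norm_add_le _ _
    _ ≤ ψ ‖y - xs‖ + ψ a := by
      rw [ha, norm_sub_rev x xs]
      exact add_le_add (hrestricted y hyD0 xs hxsD0) (hrestricted xs hxsD0 x hx)
  rw [hz, sub_right_comm]
  refine (norm_sub_apply_le_of_inverses hBx1 hBx2 hBy1 (by linarith) (by linarith) hBx hBy
    hrem hATx hdiff).trans_eq ?_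
  ring

/-- Estimate for the second sub-step `z = x - T'(y)⁻¹ T(x)`:
`‖z - x*‖ ≤ (1/(1-ψ₀(a))) [ ∫₀¹ψ((1-t)a)dt
  + (ψ(‖y-x*‖)+ψ(a)) (∫₀¹(ψ₀(ta)+1)dt)/(1-ψ₀(‖y-x*‖)) ] a`. -/
theorem second_substep_estimate
    {X Y : Type*} [NormedAddCommGroup X] [NormedSpace ℝ X] [CompleteSpace X]
    [NormedAddCommGroup Y] [NormedSpace ℝ Y] [CompleteSpace Y]
    (D : Set X) (hD : IsOpen D) (hDconv : Convex ℝ D)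
    (T : X → Y) (T' : X → X →L[ℝ] Y)
    (hT : ∀ x ∈ D, HasFDerivAt T (T' x) x)
    (hT'cont : ContinuousOn T' D)
    (xs : X) (hxs : xs ∈ D) (hTxs : T xs = 0)
    (A : Y →L[ℝ] X)
    (hA1 : A.comp (T' xs) = ContinuousLinearMap.id ℝ X)
    (hA2 : (T' xs).comp A = ContinuousLinearMap.id ℝ Y)
    (ψ0 ψ : ℝ → ℝ)
    (hψ0cont : ContinuousOn ψ0 (Ici 0)) (hψ0mono : MonotoneOn ψ0 (Ici 0))
    (hψ0zero : ψ0 0 = 0) (hψ0nonneg : ∀ t, 0 ≤ t → 0 ≤ ψ0 t)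
    (hψcont : ContinuousOn ψ (Ici 0)) (hψmono : MonotoneOn ψ (Ici 0))
    (hψzero : ψ 0 = 0) (hψnonneg : ∀ t, 0 ≤ t → 0 ≤ ψ t)
    (hcenter : ∀ x ∈ D, ‖A.comp (T' x - T' xs)‖ ≤ ψ0 ‖x - xs‖)
    -- `D₀ = D ∩ B(x*, ρ₀)` where `ρ₀ = sup {t ≥ 0 : ψ₀ t < 1}`
    (D0 : Set X)
    (hD0 : D0 = {u | u ∈ D ∧ ∃ t : ℝ, 0 ≤ t ∧ ψ0 t < 1 ∧ ‖u - xs‖ < t})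
    (hrestricted : ∀ u ∈ D0, ∀ v ∈ D0, ‖A.comp (T' u - T' v)‖ ≤ ψ ‖u - v‖)
    (x : X) (hx : x ∈ D0) (y : X) (hyD0 : y ∈ D0)
    (a : ℝ) (ha : a = ‖x - xs‖)
    (hltx : ψ0 a < 1) (hlty : ψ0 ‖y - xs‖ < 1)
    (Bx : Y →L[ℝ] X)
    (hBx1 : Bx.comp (T' x) = ContinuousLinearMap.id ℝ X)
    (hBx2 : (T' x).comp Bx = ContinuousLinearMap.id ℝ Y)
    (By : Y →L[ℝ] X)
    (hBy1 : By.comp (T' y) = ContinuousLinearMap.id ℝ X)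
    (hBy2 : (T' y).comp By = ContinuousLinearMap.id ℝ Y)
    (z : X) (hz : z = x - By (T x)) :
    ‖z - xs‖ ≤ (1 / (1 - ψ0 a)) *
      ((∫ t in (0:ℝ)..1, ψ ((1 - t) * a)) +
        (ψ ‖y - xs‖ + ψ a) * (∫ t in (0:ℝ)..1, (ψ0 (t * a) + 1)) /
          (1 - ψ0 ‖y - xs‖)) * a :=
  second_substep_estimate_general D hDconv T T' hT xs hxs hTxs A hA1 hA2 ψ0 ψ hψ0cont hψcont hcenter
    D0 hD0 hrestricted x hx y hyD0 a ha hltx hlty Bx hBx1 hBx2 By hBy1 z hz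
end

section
/- Let X = C([0,1], ℝ) with the supremum norm, and let F : X → X, F(x)(s) = x(s) − 5∫₀¹ s·t·x(t)³ dt, whose Fréchet derivative is F′(x)(v)(s) = v(s) − 15∫₀¹ s·t·x(t)²·v(t) dt. Then F′ satisfies no Hölder-type condition on X: for every constant K > 0 and every exponent q ∈ (0, 1], there exist x, y ∈ X with ‖F′(x) − F′(y)‖ > K·‖x − y‖^q (where ‖F′(x) − F′(y)‖ is the operator norm). In particular, F′ is neither Lipschitz continuous nor Hölder continuous on X. -/
/-! Take `y = 0` and `x` the constant function `c`. Against the test function `1`, the difference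
`F'(x) - F'(0)` gives `s ↦ -(15/2) c² s`, so `‖F'(x) - F'(0)‖ ≥ 15 c² / 2`, whereas for `c ≥ 1`
and `q ≤ 1` we have `K ‖x‖^q ≤ K c`. The quadratic term wins once `c` is large. -/

open MeasureTheory

theorem ContinuousMap.norm_const_of_nonempty {X E : Type*} [TopologicalSpace X] [CompactSpace X]
    [Nonempty X] [NormedAddCommGroup E] (b : E) : ‖ContinuousMap.const X b‖ = ‖b‖ := by
  rw [← BoundedContinuousFunction.norm_mkOfCompact]
  exact BoundedContinuousFunction.norm_const_eq b

theorem ContinuousLinearMap.norm_apply_one_le_opNorm {𝕜 X Y E F : Type*} [NontriviallyNormedField 𝕜]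
    [TopologicalSpace X] [CompactSpace X] [Nonempty X] [TopologicalSpace Y] [CompactSpace Y]
    [NormedRing E] [NormOneClass E] [NormedSpace 𝕜 E] [NormedAddCommGroup F] [NormedSpace 𝕜 F]
    (T : C(X, E) →L[𝕜] C(Y, F)) (y : Y) : ‖T 1 y‖ ≤ ‖T‖ :=
  calc ‖T 1 y‖ ≤ ‖T 1‖ := (T 1).norm_coe_le_norm y
    _ ≤ ‖T‖ * ‖(1 : C(X, E))‖ := T.le_opNorm 1
    _ = ‖T‖ := by rw [norm_one, mul_one]

theorem integral_coe_Icc_zero_one : ∫ t : Set.Icc (0:ℝ) 1, (t : ℝ) = 1 / 2 := by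
  rw [integral_subtype measurableSet_Icc (fun x : ℝ => x), integral_Icc_eq_integral_Ioc,
    ← intervalIntegral.integral_of_le zero_le_one, integral_id]
  norm_num

theorem exists_one_le_mul_rpow_lt_mul_sq {K a q : ℝ} (hK : 0 ≤ K) (ha : 0 < a) (hq : q ≤ 1) :
    ∃ c : ℝ, 1 ≤ c ∧ K * c ^ q < a * c ^ 2 := by
  have hc1 : 1 ≤ 1 + K / a := by linarith [div_nonneg hK ha.le]
  have hac : K < a * (1 + K / a) := by rw [mul_add, mul_div_cancel₀ K ha.ne']; linarith
  refine ⟨1 + K / a, hc1, ?_⟩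
  generalize 1 + K / a = c at hc1 hac ⊢
  calc K * c ^ q ≤ K * c := by
        gcongr
        exact (Real.rpow_le_rpow_of_exponent_le hc1 hq).trans_eq (Real.rpow_one c)
    _ < a * c * c := by gcongr
    _ = a * c ^ 2 := by ring

theorem hammerstein_deriv_const_apply_one
    (F' : C(Set.Icc (0:ℝ) 1, ℝ) → (C(Set.Icc (0:ℝ) 1, ℝ) →L[ℝ] C(Set.Icc (0:ℝ) 1, ℝ)))
    (hF' : ∀ (x v : C(Set.Icc (0:ℝ) 1, ℝ)) (s : Set.Icc (0:ℝ) 1),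
      F' x v s = v s - 15 * ∫ t : Set.Icc (0:ℝ) 1, (s : ℝ) * (t : ℝ) * (x t) ^ 2 * v t)
    (c : ℝ) (s : Set.Icc (0:ℝ) 1) :
    F' (ContinuousMap.const _ c) 1 s = 1 - 15 / 2 * c ^ 2 * s := by
  have hintegrand : (fun t : Set.Icc (0:ℝ) 1 => (s : ℝ) * t * (ContinuousMap.const _ c t) ^ 2 *
      (1 : C(Set.Icc (0:ℝ) 1, ℝ)) t) = fun t : Set.Icc (0:ℝ) 1 => (s * c ^ 2) * (t : ℝ) := by
    funext t; simp only [ContinuousMap.const_apply, ContinuousMap.one_apply]; ring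
  rw [hF', hintegrand, integral_const_mul, integral_coe_Icc_zero_one, ContinuousMap.one_apply]
  ring

theorem hammerstein_deriv_not_holder_general
    (F' : C(Set.Icc (0:ℝ) 1, ℝ) → (C(Set.Icc (0:ℝ) 1, ℝ) →L[ℝ] C(Set.Icc (0:ℝ) 1, ℝ)))
    (hF' : ∀ (x v : C(Set.Icc (0:ℝ) 1, ℝ)) (s : Set.Icc (0:ℝ) 1),
      F' x v s = v s - 15 * ∫ t : Set.Icc (0:ℝ) 1, (s : ℝ) * (t : ℝ) * (x t) ^ 2 * v t) :
    ∀ K : ℝ, 0 < K → ∀ q : ℝ, 0 < q → q ≤ 1 →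
      ∃ x y : C(Set.Icc (0:ℝ) 1, ℝ), K * ‖x - y‖ ^ q < ‖F' x - F' y‖ := by
  intro K hK q _ hq1
  obtain ⟨c, hc1, hKc⟩ := exists_one_le_mul_rpow_lt_mul_sq hK.le (by norm_num : (0:ℝ) < 15 / 2) hq1
  set x := ContinuousMap.const (Set.Icc (0:ℝ) 1) c
  have hx : ‖x - 0‖ = c := by
    rw [sub_zero, ContinuousMap.norm_const_of_nonempty, Real.norm_of_nonneg (by linarith)]
  have hzero_eq_const : (0 : C(Set.Icc (0:ℝ) 1, ℝ)) = ContinuousMap.const _ 0 := rfl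
  have hdiff : (F' x - F' 0) 1 ⟨1, by simp⟩ = -(15 / 2 * c ^ 2) := by
    rw [sub_apply, ContinuousMap.sub_apply, hzero_eq_const,
      hammerstein_deriv_const_apply_one F' hF', hammerstein_deriv_const_apply_one F' hF']
    ring
  refine ⟨x, 0, ?_⟩
  calc K * ‖x - 0‖ ^ q = K * c ^ q := by rw [hx]
    _ < 15 / 2 * c ^ 2 := hKc
    _ = ‖(F' x - F' 0) 1 ⟨1, by simp⟩‖ := by
        rw [hdiff, norm_neg, Real.norm_of_nonneg (by positivity)]
    _ ≤ ‖F' x - F' 0‖ := (F' x - F' 0).norm_apply_one_le_opNorm _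

/-- The derivative `F'` of the Hammerstein-type operator
`F(x)(s) = x(s) - 5 ∫₀¹ s t x(t)³ dt` on `C([0,1], ℝ)` satisfies no Hölder-type
condition: for every `K > 0` and every `q ∈ (0, 1]` there are `x, y` with
`‖F'(x) - F'(y)‖ > K ‖x - y‖ ^ q`. -/
theorem hammerstein_deriv_not_holder
    (F : C(Set.Icc (0:ℝ) 1, ℝ) → C(Set.Icc (0:ℝ) 1, ℝ))
    (hF : ∀ (x : C(Set.Icc (0:ℝ) 1, ℝ)) (s : Set.Icc (0:ℝ) 1),
      F x s = x s - 5 * ∫ t : Set.Icc (0:ℝ) 1, (s : ℝ) * (t : ℝ) * (x t) ^ 3)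
    (F' : C(Set.Icc (0:ℝ) 1, ℝ) → (C(Set.Icc (0:ℝ) 1, ℝ) →L[ℝ] C(Set.Icc (0:ℝ) 1, ℝ)))
    (hF'deriv : ∀ x, HasFDerivAt F (F' x) x)
    (hF' : ∀ (x v : C(Set.Icc (0:ℝ) 1, ℝ)) (s : Set.Icc (0:ℝ) 1),
      F' x v s = v s - 15 * ∫ t : Set.Icc (0:ℝ) 1, (s : ℝ) * (t : ℝ) * (x t) ^ 2 * v t) :
    ∀ K : ℝ, 0 < K → ∀ q : ℝ, 0 < q → q ≤ 1 →
      ∃ x y : C(Set.Icc (0:ℝ) 1, ℝ), K * ‖x - y‖ ^ q < ‖F' x - F' y‖ :=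
  hammerstein_deriv_not_holder_general F' hF'
end
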